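/- Let G be a Lie group acting smoothly on ℝⁿ and let f : ℝⁿ → ℝ be G-invariant, i.e., f(g·x) = f(x) for all g ∈ G and x ∈ ℝⁿ. Suppose x_k → x̄ in ℝⁿ, f is differentiable at each x_k, and ∇f(x_k) → v. Then ⟨v, w⟩ = 0 for every w ∈ Im d(θ^(x̄))_e, i.e., every limit of gradients of f at points converging to x̄ is orthogonal to the tangent space T_{x̄}(Gx̄) of the orbit of x̄. -/

import Mathlib

open scoped Manifold RealInnerProductSpace

/-- The tangent space `T_x(Gx) = Im d(θ^(x))_e` to the orbit of `x`, viewed as a linear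
subspace of `ℝⁿ`, where `θ^(x) : G → ℝⁿ, g ↦ θ g x` is the orbit map. -/
noncomputable def orbitTangent
    {E : Type*} [NormedAddCommGroup E] [NormedSpace ℝ E]
    {H : Type*} [TopologicalSpace H] (I : ModelWithCorners ℝ E H)
    {G : Type*} [TopologicalSpace G] [ChartedSpace H G] [Group G]
    {n : ℕ} (θ : G → EuclideanSpace ℝ (Fin n) → EuclideanSpace ℝ (Fin n))
    (x : EuclideanSpace ℝ (Fin n)) : Submodule ℝ (EuclideanSpace ℝ (Fin n)) :=
  LinearMap.range
    ((ContinuousLinearMap.toLinearMap :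
        (E →L[ℝ] EuclideanSpace ℝ (Fin n)) → E →ₗ[ℝ] EuclideanSpace ℝ (Fin n))
      (mfderiv I 𝓘(ℝ, EuclideanSpace ℝ (Fin n)) (fun g => θ g x) (1 : G)))

/-!
Differentiating `g ↦ f (g • y)`, which is constant, at `g = 1` shows that `∇f(y)` is orthogonal to
`Im d(θ^(y))_e` whenever `f` is differentiable at `y`. Joint smoothness of the action makes
`y ↦ d(θ^(y))_e` continuous, so this orthogonality passes to the limit `(x_k, ∇f(x_k)) → (x̄, v)`.
-/

open Function Filter Topology

section

variable {𝕜 : Type*} [NontriviallyNormedField 𝕜]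
  {E : Type*} [NormedAddCommGroup E] [NormedSpace 𝕜 E]
  {H : Type*} [TopologicalSpace H] {I : ModelWithCorners 𝕜 E H}
  {M : Type*} [TopologicalSpace M] [ChartedSpace H M]
  {E' : Type*} [NormedAddCommGroup E'] [NormedSpace 𝕜 E']
  {F : Type*} [NormedAddCommGroup F] [NormedSpace 𝕜 F]

theorem inTangentCoordinates_const_modelSpace [IsManifold I 1 M] {N : Type*} (p : M) (g : N → E')
    (ϕ : N → E →L[𝕜] E') (x₀ : N) :
    inTangentCoordinates I 𝓘(𝕜, E') (fun _ => p) g ϕ x₀ = ϕ := by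
  funext x
  rw [inTangentCoordinates_eq _ _ _ (mem_chart_source H p) (Set.mem_univ _),
    tangentBundleCore_coordChange_model_space]
  ext u
  exact congrArg (ϕ x) ((tangentBundleCore I M).coordChange_self (achart H p) p
    (mem_chart_source H p) u)

theorem continuousAt_mfderiv_of_contMDiffAt_uncurry [IsManifold I 1 M]
    {Φ : F → M → E'} {y₀ : F} {p : M}
    (hΦ : ContMDiffAt (𝓘(𝕜, F).prod I) 𝓘(𝕜, E') 1 (uncurry Φ) (y₀, p)) :
    ContinuousAt (Y := E →L[𝕜] E') (fun y => mfderiv I 𝓘(𝕜, E') (Φ y) p) y₀ := by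
  have h := (hΦ.mfderiv (m := 0) Φ (fun _ => p) contMDiffAt_const (by norm_num)).continuousAt
  -- `h` is typed with `TangentSpace`s, only defeq to the model spaces, hence `erw`.
  erw [inTangentCoordinates_const_modelSpace] at h
  exact h

theorem fderiv_mfderiv_apply_eq_zero_of_comp_const {φ : M → E'} {f : E' → F} {p : M} {y : E'}
    (hφ : MDifferentiableAt I 𝓘(𝕜, E') φ p) (hp : φ p = y) (hf : DifferentiableAt 𝕜 f y)
    (hconst : ∀ q, f (φ q) = f y) (u : E) :
    fderiv 𝕜 f y (mfderiv I 𝓘(𝕜, E') φ p u) = 0 := by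
  subst hp
  have hcomp := mfderiv_comp p hf.mdifferentiableAt hφ
  rw [mfderiv_eq_fderiv, show f ∘ φ = fun _ => f (φ p) from funext hconst, mfderiv_const] at hcomp
  exact DFunLike.congr_fun hcomp.symm u

end

theorem stmt_8_general {n : ℕ}
    {E : Type*} [NormedAddCommGroup E] [NormedSpace ℝ E]
    {H : Type*} [TopologicalSpace H] {I : ModelWithCorners ℝ E H}
    {G : Type*} [TopologicalSpace G] [ChartedSpace H G] [Group G] [LieGroup I (⊤ : ℕ∞) G]
    (θ : G → EuclideanSpace ℝ (Fin n) → EuclideanSpace ℝ (Fin n))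
    (hsmooth : ContMDiff (I.prod 𝓘(ℝ, EuclideanSpace ℝ (Fin n)))
      𝓘(ℝ, EuclideanSpace ℝ (Fin n)) (⊤ : ℕ∞) (fun p : G × EuclideanSpace ℝ (Fin n) => θ p.1 p.2))
    (hone : ∀ x, θ 1 x = x)
    (f : EuclideanSpace ℝ (Fin n) → ℝ)
    (hinv : ∀ g x, f (θ g x) = f x)
    (xbar v : EuclideanSpace ℝ (Fin n)) (x : ℕ → EuclideanSpace ℝ (Fin n))
    (hconv : Filter.Tendsto x Filter.atTop (nhds xbar))
    (hdiff : ∀ k, DifferentiableAt ℝ f (x k))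
    (hgrad : Filter.Tendsto (fun k => gradient f (x k)) Filter.atTop (nhds v)) :
    ∀ w ∈ orbitTangent I θ xbar, ⟪v, w⟫ = 0 := by
  set L : EuclideanSpace ℝ (Fin n) → E →L[ℝ] EuclideanSpace ℝ (Fin n) :=
    fun y => mfderiv I 𝓘(ℝ, EuclideanSpace ℝ (Fin n)) (fun g => θ g y) 1
  have hL : ContinuousAt L xbar :=
    continuousAt_mfderiv_of_contMDiffAt_uncurry (Φ := fun y (g : G) => θ g y)
      ((hsmooth.comp (contMDiff_snd.prodMk contMDiff_fst)).contMDiffAt.of_le (by simp))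
  have horth : ∀ k u, ⟪gradient f (x k), L (x k) u⟫ = 0 := by
    intro k u
    have hθ : MDifferentiableAt I 𝓘(ℝ, EuclideanSpace ℝ (Fin n)) (fun g : G => θ g (x k)) 1 :=
      (hsmooth.comp (contMDiff_id.prodMk contMDiff_const)).contMDiffAt.mdifferentiableAt (by simp)
    rw [inner_gradient_left]
    exact fderiv_mfderiv_apply_eq_zero_of_comp_const hθ (hone _) (hdiff k) (fun g => hinv g _) u
  rintro w ⟨u, rfl⟩
  have hlim := hgrad.inner (𝕜 := ℝ)
    ((hL.clm_apply (continuousAt_const (y := u))).tendsto.comp hconv)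
  simp only [comp_def, horth] at hlim
  exact (tendsto_const_nhds_iff.mp hlim).symm

theorem stmt_8 {n : ℕ}
    {E : Type*} [NormedAddCommGroup E] [NormedSpace ℝ E] [FiniteDimensional ℝ E]
    {H : Type*} [TopologicalSpace H] {I : ModelWithCorners ℝ E H}
    {G : Type*} [TopologicalSpace G] [ChartedSpace H G] [Group G] [LieGroup I (⊤ : ℕ∞) G]
    (θ : G → EuclideanSpace ℝ (Fin n) → EuclideanSpace ℝ (Fin n))
    (hsmooth : ContMDiff (I.prod 𝓘(ℝ, EuclideanSpace ℝ (Fin n)))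
      𝓘(ℝ, EuclideanSpace ℝ (Fin n)) (⊤ : ℕ∞) (fun p : G × EuclideanSpace ℝ (Fin n) => θ p.1 p.2))
    (hmul : ∀ g h x, θ (g * h) x = θ g (θ h x))
    (hone : ∀ x, θ 1 x = x)
    (f : EuclideanSpace ℝ (Fin n) → ℝ)
    (hinv : ∀ g x, f (θ g x) = f x)
    (xbar v : EuclideanSpace ℝ (Fin n)) (x : ℕ → EuclideanSpace ℝ (Fin n))
    (hconv : Filter.Tendsto x Filter.atTop (nhds xbar))
    (hdiff : ∀ k, DifferentiableAt ℝ f (x k))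
    (hgrad : Filter.Tendsto (fun k => gradient f (x k)) Filter.atTop (nhds v)) :
    ∀ w ∈ orbitTangent I θ xbar, ⟪v, w⟫ = 0 :=
  stmt_8_general θ hsmooth hone f hinv xbar v x hconv hdiff hgrad
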